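/- arXiv:2003.03605 — 5 statements merged into one kernel-verified Lean document; each statement's English description precedes it below -/
import Mathlib

section
/- Let G be a graph, σ a vertex ordering of G, d ∈ ℕ, and for each vertex u let ℓ(u) be the σ-minimum element of WReach_{⌊d/2⌋}[G,σ,u]. Then any two vertices u, v with ℓ(u) = ℓ(v) are at distance at most d in G; hence the partition of V(G) into equivalence classes of the relation u ∼ v ⟺ ℓ(u) = ℓ(v) is a clustering of G^d (every block is a clique in G^d). -/
open SimpleGraph Set

variable {V : Type*}

/-- The `d`-th power of a graph: distinct vertices adjacent iff joined by a walk
of length at most `d`. -/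
def gpow (G : SimpleGraph V) (d : ℕ) : SimpleGraph V where
  Adj u v := u ≠ v ∧ ∃ p : G.Walk u v, p.length ≤ d
  symm := by
    constructor
    rintro u v ⟨h, p, hp⟩
    exact ⟨h.symm, p.reverse, by simpa using hp⟩
  loopless := by constructor; rintro u ⟨h, _⟩; exact h rfl

/-- `v` is weakly `r`-reachable from `u` with respect to the ordering `σ`:
there is a path (walk) of length at most `r` from `u` to `v` all of whose
vertices are `≥_σ v`. -/
def wreach (G : SimpleGraph V) (σ : V → ℕ) (r : ℕ) (u v : V) : Prop :=
  ∃ p : G.Walk u v, p.length ≤ r ∧ ∀ x ∈ p.support, σ v ≤ σ x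

/-- The weak `r`-coloring number of the ordering `σ`. -/
noncomputable def wcolOrd (G : SimpleGraph V) (σ : V → ℕ) (r : ℕ) : ℕ :=
  sSup { n | ∃ u, n = {v | wreach G σ r u v}.ncard }

/-- The weak `r`-coloring number of `G`: minimum over (injective) vertex orderings. -/
noncomputable def wcol (G : SimpleGraph V) (r : ℕ) : ℕ :=
  sInf { c | ∃ σ : V → ℕ, Function.Injective σ ∧ wcolOrd G σ r = c }

/-- The coloring number of the ordering `σ`: max over vertices of one plus
the number of earlier neighbors. -/
noncomputable def colOrd (G : SimpleGraph V) (σ : V → ℕ) : ℕ :=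
  sSup { n | ∃ u, n = 1 + {v | G.Adj u v ∧ σ v < σ u}.ncard }

/-- The coloring number of `G` (one plus degeneracy). -/
noncomputable def colNum (G : SimpleGraph V) : ℕ :=
  sInf { c | ∃ σ : V → ℕ, Function.Injective σ ∧ colOrd G σ = c }

/-- Maximum degree. -/
noncomputable def maxDeg (G : SimpleGraph V) : ℕ :=
  sSup { n | ∃ u, n = (G.neighborSet u).ncard }

/-- Clique number. -/
noncomputable def cliqueNum' (G : SimpleGraph V) : ℕ :=
  sSup { n | ∃ s : Finset V, G.IsNClique n s }

/-- A clustering of `H`: a partition of the vertex set into cliques. -/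
def IsClustering (H : SimpleGraph V) (𝒳 : Set (Set V)) : Prop :=
  Setoid.IsPartition 𝒳 ∧ ∀ A ∈ 𝒳, H.IsClique A

/-- The quotient graph `H/𝒳`: blocks are vertices, distinct blocks adjacent iff some
pair of their elements is adjacent in `H`. -/
def quotGraph (H : SimpleGraph V) (𝒳 : Set (Set V)) : SimpleGraph 𝒳 where
  Adj A B := A ≠ B ∧ ∃ a ∈ (A : Set V), ∃ b ∈ (B : Set V), H.Adj a b
  symm := by
    constructor
    rintro A B ⟨hne, a, ha, b, hb, hab⟩
    exact ⟨hne.symm, b, hb, a, ha, hab.symm⟩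
  loopless := by constructor; rintro A ⟨h, _⟩; exact h rfl

/-- `S` induces a disjoint union of complete graphs in `H`
(adjacency is transitive on `S`). -/
def IsClusterSet (H : SimpleGraph V) (S : Set V) : Prop :=
  ∀ a ∈ S, ∀ b ∈ S, ∀ c ∈ S, H.Adj a b → H.Adj b c → a ≠ c → H.Adj a c

/-- The subchromatic number: least `c` admitting a `c`-coloring in which every color
class induces a disjoint union of complete graphs. -/
noncomputable def subchrom (H : SimpleGraph V) : ℕ :=
  sInf { c | ∃ f : V → Fin c, ∀ i, IsClusterSet H (f ⁻¹' {i}) }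

/-- A semi-ladder of length `k`: `x i` non-adjacent to `y i`, while `x i` adjacent
to `y j` whenever `i < j`. -/
def IsSemiLadder (H : SimpleGraph V) {k : ℕ} (x y : Fin k → V) : Prop :=
  (∀ i, ¬ H.Adj (x i) (y i)) ∧ ∀ i j, i < j → H.Adj (x i) (y j)

/-- The semi-ladder index of `H` is at most `q`. -/
def semiLadderIndexLE (H : SimpleGraph V) (q : ℕ) : Prop :=
  ∀ (k : ℕ) (x y : Fin k → V), IsSemiLadder H x y → k ≤ q

/-- Closed neighborhood. -/
def closedNbhd (H : SimpleGraph V) (a : V) : Set V := insert a (H.neighborSet a)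

/-- Treedepth at most `k`, via a forest (ancestor) order: a strict partial order in
which ancestors of each vertex form a chain of size `< k`, and every edge joins a
comparable pair. -/
def treedepthLE (G : SimpleGraph V) (k : ℕ) : Prop :=
  ∃ A : V → V → Prop,
    (∀ u v w, A u v → A v w → A u w) ∧ (∀ v, ¬ A v v) ∧
    (∀ a b v, A a v → A b v → a = b ∨ A a b ∨ A b a) ∧
    (∀ u v, G.Adj u v → A u v ∨ A v u) ∧
    (∀ v, {a | A a v}.ncard < k)

namespace SimpleGraph

variable {G : SimpleGraph V}

theorem gpow_adj_of_walks_to_common {u v w : V} {d : ℕ} (hne : u ≠ v) (p : G.Walk u w)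
    (q : G.Walk v w) (hpq : p.length + q.length ≤ d) : (gpow G d).Adj u v :=
  ⟨hne, p.append q.reverse, by rwa [Walk.length_append, Walk.length_reverse]⟩

theorem gpow_adj_of_wreach_common {σ : V → ℕ} {d : ℕ} {u v w : V} (hne : u ≠ v)
    (hu : wreach G σ (d / 2) u w) (hv : wreach G σ (d / 2) v w) : (gpow G d).Adj u v := by
  obtain ⟨p, hp, -⟩ := hu
  obtain ⟨q, hq, -⟩ := hv
  exact gpow_adj_of_walks_to_common hne p q (by omega)

end SimpleGraph

theorem stmt3_general (G : SimpleGraph V) (σ : V → ℕ) (d : ℕ) (ℓ : V → V)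
    (hmem : ∀ u, wreach G σ (d / 2) u (ℓ u)) :
    (∀ u v, ℓ u = ℓ v → u ≠ v → (gpow G d).Adj u v) ∧
      ∀ x, (gpow G d).IsClique { u | ℓ u = ℓ x } := by
  have fiber_adj : ∀ u v, ℓ u = ℓ v → u ≠ v → (gpow G d).Adj u v := fun u v h hne =>
    gpow_adj_of_wreach_common hne (hmem u) (h ▸ hmem v)
  exact ⟨fiber_adj, fun x u hu v hv hne => fiber_adj u v (hu.trans hv.symm) hne⟩

/-- If ℓ(u) is the σ-minimum of WReach_{⌊d/2⌋}[G,σ,u], then vertices with equal ℓ are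
at distance ≤ d, so the fibers of ℓ form a clustering of G^d. -/
theorem stmt3 (G : SimpleGraph V) (σ : V → ℕ) (d : ℕ) (ℓ : V → V)
    (hmem : ∀ u, wreach G σ (d / 2) u (ℓ u))
    (hmin : ∀ u v, wreach G σ (d / 2) u v → σ (ℓ u) ≤ σ v) :
    (∀ u v, ℓ u = ℓ v → u ≠ v → (gpow G d).Adj u v) ∧
      ∀ x, (gpow G d).IsClique { u | ℓ u = ℓ x } :=
  stmt3_general G σ d ℓ hmem
end

section
/- Let G be a graph, σ a vertex ordering of G, and d ∈ ℕ. Then there exists a clustering 𝒳 of G^d such that for all r ∈ ℕ, wcol_r(G^d / 𝒳) ≤ wcol_{2dr}(G, σ). -/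
open SimpleGraph Set

variable {V : Type*}

/-!
Let `k = ⌊d/2⌋` and send every vertex `u` to its *center*, the `σ`-least vertex weakly
`k`-reachable from `u`; the clusters are the fibres of this map. Two vertices with the same center
are at distance at most `2k ≤ d`, so each fibre is a clique of `G^d`. Order the clusters by their
centers. An edge `A B` of `G^d/𝒳` comes from a walk `a ⋯ b` of length at most `d`; its `σ`-least
vertex lies within `k` of `a` or of `b`, hence is `σ`-above the center of `A` or of `B`. Going
from the center of `A` to `a`, along the walk to `b`, and on to the center of `B` therefore stays
`σ`-above the smaller of the two centers and has length at most `2d`. Concatenating these pieces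
turns a weak `r`-reachability witness in the quotient into a weak `2dr`-reachability witness
between centers in `G`, and distinct clusters have distinct centers.
-/

section Center

variable (G : SimpleGraph V) (σ : V → ℕ)

lemma wreach_refl (k : ℕ) (u : V) : wreach G σ k u u :=
  ⟨.nil, Nat.zero_le _, by simp⟩

noncomputable def wreachCenter (k : ℕ) (u : V) : V :=
  Function.argminOn σ {v | wreach G σ k u v} ⟨u, wreach_refl G σ k u⟩

variable {G σ}

lemma wreach_wreachCenter (k : ℕ) (u : V) : wreach G σ k u (wreachCenter G σ k u) :=
  Function.argminOn_mem σ {v | wreach G σ k u v} _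

lemma wreachCenter_le {k : ℕ} {u v : V} (h : wreach G σ k u v) :
    σ (wreachCenter G σ k u) ≤ σ v :=
  Function.argminOn_le σ {v | wreach G σ k u v} h

lemma gpow_adj_of_wreachCenter_eq {k d : ℕ} (hk : 2 * k ≤ d) {u v : V} (huv : u ≠ v)
    (h : wreachCenter G σ k u = wreachCenter G σ k v) : (gpow G d).Adj u v := by
  obtain ⟨p, hp, -⟩ := wreach_wreachCenter (G := G) (σ := σ) k u
  obtain ⟨q, hq, -⟩ := wreach_wreachCenter (G := G) (σ := σ) k v
  refine ⟨huv, (p.append (q.copy rfl h.symm).reverse), ?_⟩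
  simp only [Walk.length_append, Walk.length_reverse, Walk.length_copy]
  omega

lemma min_wreachCenter_le_of_walk {k : ℕ} {a b : V} (w : G.Walk a b)
    (hw : w.length ≤ 2 * k + 1) :
    ∀ z ∈ w.support, min (σ (wreachCenter G σ k a)) (σ (wreachCenter G σ k b)) ≤ σ z := by
  classical
  obtain ⟨m, hm, hmin⟩ := w.support.toFinset.exists_min_image σ ⟨a, by simp⟩
  rw [List.mem_toFinset] at hm
  replace hmin : ∀ z ∈ w.support, σ m ≤ σ z := fun z hz => hmin z (List.mem_toFinset.2 hz)
  suffices min (σ (wreachCenter G σ k a)) (σ (wreachCenter G σ k b)) ≤ σ m from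
    fun z hz => this.trans (hmin z hz)
  have hsplit : (w.takeUntil m hm).length + (w.dropUntil m hm).length = w.length := by
    rw [← Walk.length_append, Walk.take_spec]
  rcases (by omega : (w.takeUntil m hm).length ≤ k ∨ (w.dropUntil m hm).length ≤ k) with h | h
  · refine min_le_of_left_le (wreachCenter_le ⟨w.takeUntil m hm, h, fun x hx => ?_⟩)
    exact hmin x (w.support_takeUntil_subset_support hm hx)
  · refine min_le_of_right_le (wreachCenter_le ⟨(w.dropUntil m hm).reverse, by simpa using h,
      fun x hx => ?_⟩)
    rw [Walk.support_reverse, List.mem_reverse] at hx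
    exact hmin x (w.support_dropUntil_subset_support hm hx)

lemma exists_walk_wreachCenter_wreachCenter {d : ℕ} {a b : V} (w : G.Walk a b)
    (hw : w.length ≤ d) :
    ∃ q : G.Walk (wreachCenter G σ (d / 2) a) (wreachCenter G σ (d / 2) b), q.length ≤ 2 * d ∧
      ∀ x ∈ q.support,
        min (σ (wreachCenter G σ (d / 2) a)) (σ (wreachCenter G σ (d / 2) b)) ≤ σ x := by
  obtain ⟨p, hp, hpσ⟩ := wreach_wreachCenter (G := G) (σ := σ) (d / 2) a
  obtain ⟨q, hq, hqσ⟩ := wreach_wreachCenter (G := G) (σ := σ) (d / 2) b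
  refine ⟨p.reverse.append (w.append q), ?_, fun x hx => ?_⟩
  · simp only [Walk.length_append, Walk.length_reverse]
    omega
  simp only [Walk.mem_support_append_iff, Walk.support_reverse, List.mem_reverse] at hx
  rcases hx with hx | hx | hx
  · exact min_le_of_left_le (hpσ x hx)
  · exact min_wreachCenter_le_of_walk w (by omega) x hx
  · exact min_le_of_right_le (hqσ x hx)

end Center

section Clustering

variable {G : SimpleGraph V} {σ : V → ℕ}

variable (G σ) in
def centerClustering (k : ℕ) : Set (Set V) :=
  (Setoid.ker (wreachCenter G σ k)).classes

lemma isClustering_centerClustering {k d : ℕ} (hk : 2 * k ≤ d) :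
    IsClustering (gpow G d) (centerClustering G σ k) := by
  refine ⟨Setoid.isPartition_classes _, ?_⟩
  rintro _ ⟨y, rfl⟩ u (hu : _ = _) v (hv : _ = _) huv
  exact gpow_adj_of_wreachCenter_eq hk huv (hu.trans hv.symm)

noncomputable def blockCenter {k : ℕ} (A : centerClustering G σ k) : V :=
  (Setoid.classes_ker_subset_fiber_set _ A.2).choose

lemma mem_iff_wreachCenter_eq_blockCenter {k : ℕ} (A : centerClustering G σ k) (v : V) :
    v ∈ (A : Set V) ↔ wreachCenter G σ k v = blockCenter A := by
  rw [← (Setoid.classes_ker_subset_fiber_set _ A.2).choose_spec]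
  rfl

lemma blockCenter_injective {k : ℕ} :
    Function.Injective (blockCenter : centerClustering G σ k → V) := fun A B h =>
  Subtype.ext <| Set.ext fun v => by
    rw [mem_iff_wreachCenter_eq_blockCenter, mem_iff_wreachCenter_eq_blockCenter, h]

lemma exists_walk_of_quotGraph_walk {d t : ℕ} {A B : centerClustering G σ (d / 2)}
    (p : (quotGraph (gpow G d) (centerClustering G σ (d / 2))).Walk A B)
    (hp : ∀ X ∈ p.support, t ≤ σ (blockCenter X)) :
    ∃ q : G.Walk (blockCenter A) (blockCenter B), q.length ≤ 2 * d * p.length ∧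
      ∀ x ∈ q.support, t ≤ σ x := by
  induction p with
  | nil => exact ⟨.nil, by simp, by simpa using hp⟩
  | @cons A C B hAC p ih =>
    obtain ⟨a, ha, c, hc, hac⟩ := hAC.2
    obtain ⟨-, w, hw⟩ := hac
    obtain ⟨q, hq, hqσ⟩ := ih fun X hX => hp X (List.mem_cons_of_mem _ hX)
    rw [mem_iff_wreachCenter_eq_blockCenter] at ha hc
    obtain ⟨s, hs, hsσ⟩ := exists_walk_wreachCenter_wreachCenter (σ := σ) w hw
    have htA : t ≤ σ (blockCenter A) := hp A (by simp)
    have htC : t ≤ σ (blockCenter C) := hp C (by simp)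
    refine ⟨(s.copy ha hc).append q, ?_, fun x hx => ?_⟩
    · rw [Walk.length_append, Walk.length_copy, Walk.length_cons, Nat.mul_succ]
      omega
    rcases Walk.mem_support_append_iff _ _ |>.1 hx with hx | hx
    · rw [Walk.support_copy] at hx
      exact (le_min (ha ▸ htA) (hc ▸ htC)).trans (hsσ x hx)
    · exact hqσ x hx

lemma wreach_blockCenter {d r : ℕ} {A B : centerClustering G σ (d / 2)}
    (h : wreach (quotGraph (gpow G d) (centerClustering G σ (d / 2))) (σ ∘ blockCenter) r A B) :
    wreach G σ (2 * d * r) (blockCenter A) (blockCenter B) := by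
  obtain ⟨p, hp, hpσ⟩ := h
  obtain ⟨q, hq, hqσ⟩ := exists_walk_of_quotGraph_walk p hpσ
  exact ⟨q, hq.trans (Nat.mul_le_mul_left _ hp), hqσ⟩

end Clustering

section WeakColoringNumber

variable {W : Type*} {G : SimpleGraph V} {σ : V → ℕ}

lemma ncard_wreach_le_wcolOrd [Finite V] (r : ℕ) (u : V) :
    {v | wreach G σ r u v}.ncard ≤ wcolOrd G σ r :=
  le_csSup ⟨Nat.card V, by rintro _ ⟨u, rfl⟩; exact Set.ncard_le_card _⟩ ⟨u, rfl⟩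

lemma wcolOrd_comp_le [Finite V] {H : SimpleGraph W} {c : W → V} (hc : Function.Injective c)
    {r R : ℕ} (h : ∀ A B, wreach H (σ ∘ c) r A B → wreach G σ R (c A) (c B)) :
    wcolOrd H (σ ∘ c) r ≤ wcolOrd G σ R := by
  refine csSup_le' ?_
  rintro _ ⟨A, rfl⟩
  calc {B | wreach H (σ ∘ c) r A B}.ncard
      = (c '' {B | wreach H (σ ∘ c) r A B}).ncard := (Set.ncard_image_of_injective _ hc).symm
    _ ≤ {v | wreach G σ R (c A) v}.ncard :=
      Set.ncard_le_ncard (by rintro _ ⟨B, hB, rfl⟩; exact h A B hB)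
    _ ≤ wcolOrd G σ R := ncard_wreach_le_wcolOrd R (c A)

lemma wcol_le_wcolOrd {H : SimpleGraph W} {τ : W → ℕ} (hτ : Function.Injective τ) (r : ℕ) :
    wcol H r ≤ wcolOrd H τ r :=
  Nat.sInf_le ⟨τ, hτ, rfl⟩

end WeakColoringNumber

/-- Main theorem: there is a clustering 𝒳 of G^d with wcol_r(G^d/𝒳) ≤ wcol_{2dr}(G,σ). -/
theorem stmt4 [Fintype V] (G : SimpleGraph V) (σ : V → ℕ)
    (hσ : Function.Injective σ) (d : ℕ) :
    ∃ 𝒳 : Set (Set V), IsClustering (gpow G d) 𝒳 ∧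
      ∀ r : ℕ, wcol (quotGraph (gpow G d) 𝒳) r ≤ wcolOrd G σ (2 * d * r) := by
  refine ⟨centerClustering G σ (d / 2), isClustering_centerClustering (Nat.mul_div_le d 2),
    fun r => ?_⟩
  calc wcol (quotGraph (gpow G d) (centerClustering G σ (d / 2))) r
      ≤ wcolOrd _ (σ ∘ blockCenter) r := wcol_le_wcolOrd (hσ.comp blockCenter_injective) r
    _ ≤ wcolOrd G σ (2 * d * r) :=
      wcolOrd_comp_le blockCenter_injective fun _ _ => wreach_blockCenter
end

section
/- For every graph G and odd integer d = 2k+1 with k ≥ 1, χ(G^d) ≤ ω(G^d)^3. -/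
open SimpleGraph Set

variable {V : Type*}

/-!
A ball of radius `k` in `G` is a clique in `G^(2k+1)`, so it has at most `ω` vertices. A ball of
radius `(n+1)k` is covered by the radius-`nk` balls around the points of a radius-`k` ball, so by
induction it has at most `ωⁿ` vertices. Since `k ≥ 1`, the closed `G^(2k+1)`-neighbourhood of a
vertex lies in its ball of radius `3k`, so every degree in `G^(2k+1)` is below `ω³` and greedy
coloring finishes.
-/

namespace SimpleGraph

open Finset

theorem colorable_of_forall_degree_lt [Fintype V] (H : SimpleGraph V) [DecidableRel H.Adj]
    {n : ℕ} (h : ∀ v, H.degree v < n) : H.Colorable n := by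
  classical
  suffices ∀ s : Finset V, ∃ f : V → Fin n, ∀ u ∈ s, ∀ v ∈ s, H.Adj u v → f u ≠ f v by
    obtain ⟨f, hf⟩ := this univ
    exact ⟨Coloring.mk f fun huv => hf _ (mem_univ _) _ (mem_univ _) huv⟩
  intro s
  induction s using Finset.induction_on with
  | empty => exact ⟨fun v => ⟨0, Nat.zero_lt_of_lt (h v)⟩, by simp⟩
  | insert a s has ih =>
    obtain ⟨f, hf⟩ := ih
    obtain ⟨c, -, hc⟩ := exists_mem_notMem_of_card_lt_card
      (s := (H.neighborFinset a).image f) (t := univ)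
      (by simpa using card_image_le.trans_lt (h a))
    have hfree : ∀ w, H.Adj a w → f w ≠ c := fun w hw hwc =>
      hc (mem_image.mpr ⟨w, (mem_neighborFinset H a w).mpr hw, hwc⟩)
    refine ⟨Function.update f a c, ?_⟩
    simp only [Finset.mem_insert]
    rintro u (rfl | hu) v (rfl | hv) huv
    · exact absurd huv H.irrefl
    · rw [Function.update_self, Function.update_of_ne (ne_of_mem_of_not_mem hv has)]
      exact (hfree v huv).symm
    · rw [Function.update_self, Function.update_of_ne (ne_of_mem_of_not_mem hu has)]
      exact hfree u huv.symm
    · rw [Function.update_of_ne (ne_of_mem_of_not_mem hu has),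
        Function.update_of_ne (ne_of_mem_of_not_mem hv has)]
      exact hf u hu v hv huv

theorem card_le_cliqueNum' [Fintype V] {H : SimpleGraph V} {s : Finset V}
    (hs : H.IsClique (s : Set V)) : #s ≤ cliqueNum' H :=
  le_csSup ⟨Fintype.card V, by rintro n ⟨t, ht⟩; exact ht.card_eq ▸ card_le_univ t⟩ ⟨s, hs, rfl⟩

section closedBall

variable [Fintype V] {G : SimpleGraph V}

noncomputable def closedBall (G : SimpleGraph V) (u : V) (r : ℕ) : Finset V := by
  classical exact univ.filter fun v => ∃ p : G.Walk u v, p.length ≤ r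

theorem mem_closedBall {u v : V} {r : ℕ} :
    v ∈ G.closedBall u r ↔ ∃ p : G.Walk u v, p.length ≤ r := by
  classical simp [closedBall]

theorem closedBall_zero (u : V) : G.closedBall u 0 = {u} := by
  ext v
  rw [mem_closedBall, Finset.mem_singleton]
  refine ⟨fun ⟨p, hp⟩ => (Walk.eq_of_length_eq_zero (Nat.le_zero.mp hp)).symm, ?_⟩
  rintro rfl
  exact ⟨Walk.nil, le_rfl⟩

theorem closedBall_mono {r s : ℕ} (h : r ≤ s) (u : V) : G.closedBall u r ⊆ G.closedBall u s :=
  fun _ hv => have ⟨p, hp⟩ := mem_closedBall.mp hv; mem_closedBall.mpr ⟨p, hp.trans h⟩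

theorem closedBall_add_subset [DecidableEq V] (u : V) (r s : ℕ) :
    G.closedBall u (r + s) ⊆ (G.closedBall u r).biUnion fun w => G.closedBall w s := by
  intro v hv
  obtain ⟨p, hp⟩ := mem_closedBall.mp hv
  refine mem_biUnion.mpr ⟨p.getVert r, mem_closedBall.mpr ⟨p.take r, ?_⟩,
    mem_closedBall.mpr ⟨p.drop r, ?_⟩⟩
  · simp
  · rw [Walk.drop_length]; omega

theorem card_closedBall_mul_le {r m : ℕ} (hm : ∀ w, #(G.closedBall w r) ≤ m) (u : V) (n : ℕ) :
    #(G.closedBall u (n * r)) ≤ m ^ n := by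
  classical
  induction n generalizing u with
  | zero => simp [closedBall_zero]
  | succ n ih =>
    calc #(G.closedBall u ((n + 1) * r))
        ≤ #((G.closedBall u r).biUnion fun w => G.closedBall w (n * r)) := by
          rw [add_one_mul, add_comm]
          exact Finset.card_le_card (closedBall_add_subset u r (n * r))
      _ ≤ ∑ w ∈ G.closedBall u r, #(G.closedBall w (n * r)) := card_biUnion_le
      _ ≤ #(G.closedBall u r) * m ^ n := by simpa using sum_le_card_nsmul _ _ _ fun w _ => ih w
      _ ≤ m ^ (n + 1) := by rw [pow_succ']; exact Nat.mul_le_mul_right _ (hm u)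

theorem isClique_gpow_closedBall {k d : ℕ} (hd : 2 * k ≤ d) (w : V) :
    (gpow G d).IsClique (G.closedBall w k : Set V) := by
  intro x hx y hy hxy
  obtain ⟨p, hp⟩ := mem_closedBall.mp hx
  obtain ⟨q, hq⟩ := mem_closedBall.mp hy
  refine ⟨hxy, p.reverse.append q, ?_⟩
  rw [Walk.length_append, Walk.length_reverse]
  omega

theorem degree_gpow_lt_card_closedBall (d : ℕ) [DecidableRel (gpow G d).Adj] (v : V) :
    (gpow G d).degree v < #(G.closedBall v d) := by
  classical
  have hsub : (gpow G d).neighborFinset v ⊆ (G.closedBall v d).erase v := fun w hw =>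
    have ⟨hne, p, hp⟩ := (mem_neighborFinset _ _ _).mp hw
    mem_erase.mpr ⟨hne.symm, mem_closedBall.mpr ⟨p, hp⟩⟩
  rw [← card_neighborFinset_eq_degree]
  exact (Finset.card_le_card hsub).trans_lt
    (card_erase_lt_of_mem (mem_closedBall.mpr ⟨Walk.nil, Nat.zero_le _⟩))

end closedBall

end SimpleGraph

open SimpleGraph Finset in
/-- For odd d = 2k+1 with k ≥ 1, χ(G^d) ≤ ω(G^d)³. -/
theorem stmt11 [Fintype V] (G : SimpleGraph V) (k : ℕ) (hk : 1 ≤ k) :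
    (gpow G (2 * k + 1)).chromaticNumber ≤
      ((cliqueNum' (gpow G (2 * k + 1))) ^ 3 : ℕ) := by
  classical
  set ω := cliqueNum' (gpow G (2 * k + 1))
  have hball : ∀ w, #(G.closedBall w k) ≤ ω := fun w =>
    card_le_cliqueNum' (isClique_gpow_closedBall (by omega) w)
  have hdeg : ∀ v, (gpow G (2 * k + 1)).degree v < ω ^ 3 := fun v =>
    calc (gpow G (2 * k + 1)).degree v < #(G.closedBall v (2 * k + 1)) :=
          degree_gpow_lt_card_closedBall _ v
      _ ≤ #(G.closedBall v (3 * k)) := Finset.card_le_card (closedBall_mono (by omega) v)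
      _ ≤ ω ^ 3 := card_closedBall_mul_le hball v 3
  exact (colorable_of_forall_degree_lt _ hdeg).chromaticNumber_le
end

section
/- If a graph G has maximum degree at most r and girth greater than 3d, then for even d, ω(G^d) ≤ 1 + r·((r-1)^{d/2} - 1)/(r-2) for r ≥ 3 (more loosely, ω(G^d) = O(r^{d/2})); equivalently: every clique in G^d is contained in a ball of radius d/2 around some vertex. -/
open SimpleGraph Set

variable {V : Type*}

/-!
Let `u`, `w` be two vertices of the clique at maximal distance `t ≤ d`, and `c` the midpoint of a
geodesic `P` from `u` to `w`. For any other vertex `v` of the clique, geodesics `u – v` and `v – w`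
together with `P` have at most `3d` edges, fewer than the girth, so they span a forest and `P` is
covered by the other two; thus `c` lies on one of them, which puts `v` within `⌈t/2⌉ ≤ d/2` of `c`.
In a graph of maximum degree `r`, a ball of radius `k` has at most
`1 + r + r(r-1) + ⋯ + r(r-1)^(k-1)` vertices: each vertex at distance `j + 1` from the centre is
adjacent to one at distance `j`, which for `j ≥ 1` has a neighbour at distance `j - 1` as well.
-/

open scoped Finset

namespace SimpleGraph

variable {G : SimpleGraph V} {u v x c : V} {j : ℕ}

-- A cycle in the subgraph spanned by `p` and `q` would be shorter than the girth, so `p` is the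
-- unique path there between its ends and coincides with `q.bypass`.
theorem Walk.support_subset_of_isPath_of_length_add_lt_egirth {p q : G.Walk u v} (hp : p.IsPath)
    (hlen : ((p.length + q.length : ℕ) : ℕ∞) < G.egirth) : p.support ⊆ q.support := by
  classical
  let H : SimpleGraph V := fromEdgeSet {e | e ∈ p.edges ++ q.edges}
  have hG : ∀ e ∈ p.edges ++ q.edges, e ∈ G.edgeSet := fun e he =>
    (List.mem_append.mp he).elim (p.edges_subset_edgeSet ·) (q.edges_subset_edgeSet ·)
  have hH : ∀ e ∈ p.edges ++ q.edges, e ∈ H.edgeSet := fun e he => by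
    rw [edgeSet_fromEdgeSet]
    exact ⟨he, G.not_isDiag_of_mem_edgeSet (hG e he)⟩
  have hpH : ∀ e ∈ p.edges, e ∈ H.edgeSet := fun e he => hH e (List.mem_append_left _ he)
  have hqH : ∀ e ∈ q.edges, e ∈ H.edgeSet := fun e he => hH e (List.mem_append_right _ he)
  have hHpq : ∀ e ∈ H.edgeSet, e ∈ p.edges ++ q.edges := fun e he => by
    rw [edgeSet_fromEdgeSet] at he
    exact he.1
  have hHacyclic : H.IsAcyclic := by
    intro a c hc
    have hcpq : c.edges ⊆ p.edges ++ q.edges := fun e he => hHpq e (c.edges_subset_edgeSet he)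
    have hcG : ∀ e ∈ c.edges, e ∈ G.edgeSet := fun e he => hG e (hcpq he)
    have hshort : c.length ≤ p.length + q.length := by
      simpa using (List.subperm_of_subset hc.edges_nodup hcpq).length_le
    have hlong := egirth_le_length (hc.transfer hcG)
    rw [Walk.length_transfer] at hlong
    exact absurd (hlen.trans_le hlong) (not_lt.mpr (by exact_mod_cast hshort))
  have hpq : p.transfer H hpH = (q.transfer H hqH).bypass :=
    congrArg Subtype.val <|
      (hHacyclic.subsingleton_path u v).elim ⟨_, hp.transfer hpH⟩ ⟨_, Walk.bypass_isPath _⟩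
  intro y hy
  rw [← Walk.support_transfer p hpH, hpq] at hy
  simpa using Walk.support_bypass_subset_support _ hy

theorem dist_add_dist_le_length (p : G.Walk u v) (hx : x ∈ p.support) :
    G.dist u x + G.dist x v ≤ p.length := by
  classical
  rw [← p.take_spec hx, Walk.length_append]
  exact add_le_add (dist_le _) (dist_le _)

theorem Walk.exists_mem_support_dist_eq_of_length_eq_dist (p : G.Walk u v)
    (hp : p.length = G.dist u v) {i : ℕ} (hi : i ≤ p.length) :
    ∃ x ∈ p.support, G.dist u x = i ∧ G.dist x v = p.length - i := by
  refine ⟨p.getVert i, p.getVert_mem_support i, ?_⟩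
  have h₁ := dist_le (p.take i)
  have h₂ := dist_le (p.drop i)
  have h₃ := (p.take i).reachable.dist_triangle_left v
  rw [Walk.take_length] at h₁
  rw [Walk.drop_length] at h₂
  omega

theorem exists_forall_dist_le_of_forall_dist_le {S : Set V} {d : ℕ}
    (hg : (3 * d : ℕ∞) < G.egirth) (hS : ∀ a ∈ S, ∀ b ∈ S, G.Reachable a b ∧ G.dist a b ≤ d)
    (hne : S.Nonempty) : ∃ c, ∀ v ∈ S, G.Reachable v c ∧ G.dist v c ≤ (d + 1) / 2 := by
  classical
  obtain ⟨u, hu, w, hw, hmax⟩ :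
      ∃ u ∈ S, ∃ w ∈ S, ∀ a ∈ S, ∀ b ∈ S, G.dist a b ≤ G.dist u w := by
    let D : Set ℕ := {n | ∃ a ∈ S, ∃ b ∈ S, G.dist a b = n}
    have hD : BddAbove D := ⟨d, by rintro _ ⟨a, ha, b, hb, rfl⟩; exact (hS a ha b hb).2⟩
    obtain ⟨a, ha⟩ := hne
    obtain ⟨u, hu, w, hw, huw⟩ := Nat.sSup_mem (s := D) ⟨_, a, ha, a, ha, rfl⟩ hD
    exact ⟨u, hu, w, hw, fun a ha b hb => huw ▸ le_csSup hD ⟨a, ha, b, hb, rfl⟩⟩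
  obtain ⟨P, hP, hPlen⟩ := (hS u hu w hw).1.exists_path_of_dist
  obtain ⟨c, hcP, huc, hcw⟩ :=
    P.exists_mem_support_dist_eq_of_length_eq_dist hPlen (Nat.div_le_self P.length 2)
  have hPd : P.length ≤ d := hPlen ▸ (hS u hu w hw).2
  refine ⟨c, fun v hv => ⟨(hS v hv u hu).1.trans (P.takeUntil c hcP).reachable, ?_⟩⟩
  obtain ⟨Q, hQ⟩ := (hS u hu v hv).1.exists_walk_length_eq_dist
  obtain ⟨R, hR⟩ := (hS v hv w hw).1.exists_walk_length_eq_dist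
  have huv := hmax u hu v hv
  have hvw := hmax v hv w hw
  have hc : c ∈ Q.support ∨ c ∈ R.support := by
    rw [← Walk.mem_support_append_iff]
    refine Walk.support_subset_of_isPath_of_length_add_lt_egirth hP (lt_of_le_of_lt ?_ hg) hcP
    rw [Walk.length_append]
    exact_mod_cast (by omega : P.length + (Q.length + R.length) ≤ 3 * d)
  rcases hc with hcQ | hcR
  · have := dist_add_dist_le_length Q hcQ
    rw [dist_comm]
    omega
  · have := dist_add_dist_le_length R hcR
    omega

theorem exists_adj_edist_eq_of_edist_eq_succ (h : G.edist v c = j + 1) :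
    ∃ x, G.Adj v x ∧ G.edist x c = j := by
  obtain ⟨p, hp⟩ := exists_walk_of_edist_eq_coe h
  cases p with
  | nil => simp at hp
  | @cons _ x _ hvx q =>
    have hq : q.length = j := by simpa using hp
    refine ⟨x, hvx, le_antisymm (hq ▸ edist_le q) ?_⟩
    have := G.edist_triangle (u := v) (v := x) (w := c)
    rw [h, edist_eq_one_iff_adj.mpr hvx, add_comm (j : ℕ∞)] at this
    exact (ENat.add_le_add_iff_left ENat.one_ne_top).mp this

variable [Fintype V]

open Classical in
noncomputable def sphere (G : SimpleGraph V) (c : V) (j : ℕ) : Finset V :=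
  {v | G.edist v c = j}

@[simp]
theorem mem_sphere : v ∈ G.sphere c j ↔ G.edist v c = j := by
  simp [sphere]

theorem sphere_zero : G.sphere c 0 = {c} := by
  ext v
  simp [edist_eq_zero_iff]

variable [DecidableEq V] [DecidableRel G.Adj]

theorem card_sphere_succ_le_card_mul {m : ℕ}
    (h : ∀ x ∈ G.sphere c j, #(G.neighborFinset x ∩ G.sphere c (j + 1)) ≤ m) :
    #(G.sphere c (j + 1)) ≤ #(G.sphere c j) * m := by
  refine (Finset.card_le_card fun v hv => ?_).trans (Finset.card_biUnion_le_card_mul _ _ _ h)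
  obtain ⟨x, hvx, hx⟩ := exists_adj_edist_eq_of_edist_eq_succ (mem_sphere.mp hv)
  exact Finset.mem_biUnion.mpr
    ⟨x, mem_sphere.mpr hx, Finset.mem_inter.mpr ⟨(mem_neighborFinset ..).mpr hvx.symm, hv⟩⟩

theorem card_neighborFinset_inter_sphere_le (hx : x ∈ G.sphere c (j + 1)) :
    #(G.neighborFinset x ∩ G.sphere c (j + 2)) ≤ G.degree x - 1 := by
  obtain ⟨y, hxy, hy⟩ := exists_adj_edist_eq_of_edist_eq_succ (mem_sphere.mp hx)
  have hsub : G.neighborFinset x ∩ G.sphere c (j + 2) ⊆ (G.neighborFinset x).erase y := by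
    intro v hv
    rw [Finset.mem_inter, mem_sphere] at hv
    refine Finset.mem_erase.mpr ⟨?_, hv.1⟩
    rintro rfl
    rw [hy] at hv
    exact absurd hv.2 (by norm_cast; omega)
  simpa [Finset.card_erase_of_mem ((mem_neighborFinset ..).mpr hxy)]
    using Finset.card_le_card hsub

theorem card_sphere_succ_le {r : ℕ} (hΔ : ∀ x, G.degree x ≤ r) (j : ℕ) :
    #(G.sphere c (j + 1)) ≤ r * (r - 1) ^ j := by
  induction j with
  | zero =>
    simpa [sphere_zero] using card_sphere_succ_le_card_mul (c := c) (j := 0) (m := r)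
      fun x _ => (Finset.card_le_card Finset.inter_subset_left).trans
        ((card_neighborFinset_eq_degree ..).trans_le (hΔ x))
  | succ j ih =>
    calc #(G.sphere c (j + 2)) ≤ #(G.sphere c (j + 1)) * (r - 1) :=
          card_sphere_succ_le_card_mul fun x hx =>
            (card_neighborFinset_inter_sphere_le hx).trans (Nat.sub_le_sub_right (hΔ x) 1)
      _ ≤ r * (r - 1) ^ j * (r - 1) := Nat.mul_le_mul_right _ ih
      _ = r * (r - 1) ^ (j + 1) := by ring

open Classical in
theorem card_filter_edist_le_le {r : ℕ} (hΔ : ∀ x, G.degree x ≤ r) (c : V) (k : ℕ) :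
    #{v | G.edist v c ≤ k} ≤ 1 + ∑ i ∈ Finset.range k, r * (r - 1) ^ i := by
  have hsub : ({v | G.edist v c ≤ k} : Finset V) ⊆
      (Finset.range (k + 1)).biUnion (G.sphere c) := by
    intro v hv
    rw [Finset.mem_filter] at hv
    obtain ⟨n, hn⟩ :=
      ENat.ne_top_iff_exists.mp (ne_top_of_le_ne_top (ENat.natCast_ne_top k) hv.2)
    rw [← hn, Nat.cast_le] at hv
    exact Finset.mem_biUnion.mpr
      ⟨n, Finset.mem_range.mpr (Nat.lt_succ_of_le hv.2), mem_sphere.mpr hn.symm⟩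
  calc #{v | G.edist v c ≤ k} ≤ ∑ j ∈ Finset.range (k + 1), #(G.sphere c j) :=
        (Finset.card_le_card hsub).trans Finset.card_biUnion_le
    _ = ∑ j ∈ Finset.range k, #(G.sphere c (j + 1)) + 1 := by
      rw [Finset.sum_range_succ', sphere_zero, Finset.card_singleton]
    _ ≤ ∑ j ∈ Finset.range k, r * (r - 1) ^ j + 1 := by
      gcongr with j
      exact card_sphere_succ_le hΔ j
    _ = _ := add_comm _ _

end SimpleGraph

theorem reachable_and_dist_le_of_isClique_gpow {G : SimpleGraph V} {d : ℕ} {S : Set V}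
    (hS : (gpow G d).IsClique S) {a b : V} (ha : a ∈ S) (hb : b ∈ S) :
    G.Reachable a b ∧ G.dist a b ≤ d := by
  obtain rfl | hab := eq_or_ne a b
  · simp
  · obtain ⟨-, p, hp⟩ := hS ha hb hab
    exact ⟨p.reachable, (dist_le p).trans hp⟩

theorem degree_le_of_maxDeg_le [Finite V] {G : SimpleGraph V} {r : ℕ} (h : maxDeg G ≤ r) (x : V)
    [Fintype (G.neighborSet x)] : G.degree x ≤ r := by
  have hbdd : BddAbove {n | ∃ u, n = (G.neighborSet u).ncard} :=
    (Set.finite_range fun u => (G.neighborSet u).ncard).bddAbove.mono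
      (by rintro _ ⟨u, rfl⟩; exact ⟨u, rfl⟩)
  rw [← card_neighborSet_eq_degree, ← Nat.card_eq_fintype_card, Nat.card_coe_set_eq]
  exact (le_csSup hbdd ⟨x, rfl⟩).trans h

theorem cliqueNum'_le_of_forall_isClique_card_le {H : SimpleGraph V} {m : ℕ}
    (h : ∀ s : Finset V, H.IsClique s → #s ≤ m) : cliqueNum' H ≤ m :=
  csSup_le ⟨0, ∅, by simp⟩ fun _ ⟨s, hs⟩ => hs.card_eq ▸ h s hs.isClique

/-- If Δ(G) ≤ r and girth(G) > 3d with d even, then every clique of G^d lies in a ball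
of radius d/2, and ω(G^d) ≤ 1 + r + r(r-1) + ⋯ + r(r-1)^{d/2-1}. -/
theorem stmt12 [Fintype V] (G : SimpleGraph V) (d r : ℕ) (hd : Even d)
    (hg : (3 * d : ℕ∞) < G.girth) (hΔ : maxDeg G ≤ r) :
    (∀ S : Set V, S.Nonempty → (gpow G d).IsClique S →
        ∃ c : V, ∀ v ∈ S, G.dist v c ≤ d / 2) ∧
      cliqueNum' (gpow G d) ≤ 1 + ∑ i ∈ Finset.range (d / 2), r * (r - 1) ^ i := by
  classical
  have center : ∀ S : Set V, S.Nonempty → (gpow G d).IsClique S →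
      ∃ c, ∀ v ∈ S, G.Reachable v c ∧ G.dist v c ≤ d / 2 := by
    intro S hne hS
    have hd' : (d + 1) / 2 = d / 2 := by obtain ⟨k, rfl⟩ := hd; omega
    rw [← hd']
    exact exists_forall_dist_le_of_forall_dist_le (hg.trans_le (ENat.natCast_toNat_le_self _))
      (fun a ha b hb => reachable_and_dist_le_of_isClique_gpow hS ha hb) hne
  refine ⟨fun S hne hS => ?_, cliqueNum'_le_of_forall_isClique_card_le fun s hs => ?_⟩
  · obtain ⟨c, hc⟩ := center S hne hS
    exact ⟨c, fun v hv => (hc v hv).2⟩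
  obtain rfl | hne := s.eq_empty_or_nonempty
  · simp
  obtain ⟨c, hc⟩ := center s hne hs
  calc #s ≤ #{v | G.edist v c ≤ (d / 2 : ℕ)} := Finset.card_le_card fun v hv => by
        simpa [← (hc v hv).1.coe_dist_eq_edist] using (hc v hv).2
    _ ≤ _ := card_filter_edist_le_le (fun x => degree_le_of_maxDeg_le hΔ x) c (d / 2)
end

section
/- For every graph H with semi-ladder index at most q and every inclusion-wise maximal clique K in H, there exists a subset A ⊆ K with |A| ≤ q such that K equals the intersection of the closed neighborhoods of the vertices of A: K = ⋂_{a∈A} N_H[a]. -/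
open SimpleGraph Set

variable {V : Type*}

/-!
Grow a semi-ladder greedily, keeping all `x i` in `K`. While `⋂ i, N[x i]` is not contained
in `K`, pick `b` in it outside `K`; by maximality some `a ∈ K` is not adjacent to `b`, while `b`
is adjacent to every `x i` (it lies in `N[x i]` and differs from `x i ∈ K`), so `(a, b)` extends
the semi-ladder. The length bound `q` stops this after at most `q` steps, and then
`K = ⋂ i, N[x i]`.
-/

namespace SimpleGraph

variable {H : SimpleGraph V} {K : Set V} {a v : V}

lemma mem_closedNbhd : v ∈ closedNbhd H a ↔ v = a ∨ H.Adj a v := Iff.rfl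

lemma adj_of_mem_closedNbhd (hv : v ∈ closedNbhd H a) (hne : v ≠ a) : H.Adj a v :=
  hv.resolve_left hne

lemma IsClique.subset_closedNbhd (hK : H.IsClique K) (ha : a ∈ K) : K ⊆ closedNbhd H a :=
  fun _ hv => mem_closedNbhd.2 <| or_iff_not_imp_left.2 fun hva => hK ha hv (Ne.symm hva)

lemma exists_notMem_closedNbhd_of_maximal (hK : Maximal H.IsClique K) (hv : v ∉ K) :
    ∃ a ∈ K, v ∉ closedNbhd H a := by
  by_contra! h
  have hvK : H.IsClique (insert v K) :=
    hK.prop.insert fun b hb hvb => (adj_of_mem_closedNbhd (h b hb) hvb).symm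
  exact hv (hK.le_of_ge hvK (subset_insert v K) (mem_insert v K))

lemma _root_.IsSemiLadder.snoc {k : ℕ} {x y : Fin k → V} (h : IsSemiLadder H x y) {a b : V}
    (hab : ¬ H.Adj a b) (hb : ∀ i, H.Adj (x i) b) :
    IsSemiLadder H (Fin.snoc x a : Fin (k + 1) → V) (Fin.snoc y b) := by
  refine ⟨Fin.lastCases (by simpa using hab) fun i => by simpa using h.1 i, fun i j hij => ?_⟩
  obtain ⟨i, rfl⟩ := Fin.exists_castSucc_eq.mpr (Fin.ne_last_of_lt hij)
  induction j using Fin.lastCases with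
  | last => simpa using hb i
  | cast j => simpa using h.2 i j (by simpa using hij)

lemma exists_semiLadder_succ_or_eq_iInter_closedNbhd (hK : Maximal H.IsClique K) {n : ℕ}
    {x y : Fin n → V} (hxy : IsSemiLadder H x y) (hx : ∀ i, x i ∈ K) :
    (∃ x' y' : Fin (n + 1) → V, IsSemiLadder H x' y' ∧ ∀ i, x' i ∈ K) ∨
      K = ⋂ i, closedNbhd H (x i) := by
  by_cases hsub : ⋂ i, closedNbhd H (x i) ⊆ K
  · exact Or.inr <| (subset_iInter fun i => hK.prop.subset_closedNbhd (hx i)).antisymm hsub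
  obtain ⟨b, hb, hbK⟩ := not_subset.1 hsub
  obtain ⟨a, haK, hba⟩ := exists_notMem_closedNbhd_of_maximal hK hbK
  have hxb : ∀ i, H.Adj (x i) b := fun i =>
    adj_of_mem_closedNbhd (mem_iInter.1 hb i) (ne_of_mem_of_not_mem (hx i) hbK).symm
  refine Or.inl ⟨_, _, hxy.snoc (fun h => hba (Or.inr h)) hxb, ?_⟩
  exact Fin.lastCases (by simpa using haK) fun i => by simpa using hx i

lemma exists_semiLadder_or_eq_biInter_closedNbhd (hK : Maximal H.IsClique K) (n : ℕ) :
    (∃ x y : Fin n → V, IsSemiLadder H x y ∧ ∀ i, x i ∈ K) ∨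
      ∃ A ⊆ K, A.Finite ∧ A.ncard < n ∧ K = ⋂ a ∈ A, closedNbhd H a := by
  induction n with
  | zero => exact Or.inl ⟨Fin.elim0, Fin.elim0, ⟨finZeroElim, finZeroElim⟩, finZeroElim⟩
  | succ n ih =>
    obtain ⟨x, y, hxy, hx⟩ | ⟨A, hAK, hA, hAn, hKA⟩ := ih
    · refine (exists_semiLadder_succ_or_eq_iInter_closedNbhd hK hxy hx).imp id fun hKx => ?_
      have hxn : (range x).ncard ≤ n := by
        rw [← image_univ]
        exact (ncard_image_le finite_univ).trans_eq (by simp)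
      exact ⟨range x, range_subset_iff.2 hx, finite_range x, by omega, by rwa [biInter_range]⟩
    · exact Or.inr ⟨A, hAK, hA, by omega, hKA⟩

end SimpleGraph

/-- If H has semi-ladder index ≤ q, every maximal clique K is the intersection of the
closed neighborhoods of at most q of its vertices. -/
theorem stmt13 (H : SimpleGraph V) (q : ℕ) (hq : semiLadderIndexLE H q)
    (K : Set V) (hK : H.IsClique K)
    (hmax : ∀ K' : Set V, H.IsClique K' → K ⊆ K' → K = K') :
    ∃ A : Set V, A ⊆ K ∧ A.Finite ∧ A.ncard ≤ q ∧
      K = ⋂ a ∈ A, closedNbhd H a := by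
  have hKmax : Maximal H.IsClique K := ⟨hK, fun K' hK' hKK' => (hmax K' hK' hKK').ge⟩
  obtain ⟨x, y, hxy, -⟩ | ⟨A, hAK, hA, hAq, hKA⟩ :=
    exists_semiLadder_or_eq_biInter_closedNbhd hKmax (q + 1)
  · exact absurd (hq _ x y hxy) (by omega)
  · exact ⟨A, hAK, hA, by omega, hKA⟩
end
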